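/- Assume q = p (i.e. n = 1), and let χ : H → kˣ be a character with χ ≠ χ^s. Then the kernel of T_{n_s} : Ind_B^Γ χ^s → Ind_B^Γ χ equals the image of T_{n_s} : Ind_B^Γ χ → Ind_B^Γ χ^s; that is, there is a short exact sequence of k[Γ]-modules 0 → Im(T_{n_s} : Ind_B^Γ χ → Ind_B^Γ χ^s) → Ind_B^Γ χ^s → Im(T_{n_s} : Ind_B^Γ χ^s → Ind_B^Γ χ) → 0, in which the first map is the inclusion and the second is T_{n_s}. -/

import Mathlib

open Matrix

noncomputable section

abbrev GL2 (F : Type) [Field F] := Matrix.GeneralLinearGroup (Fin 2) F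

variable (F : Type) [Field F] [Fintype F] (k : Type) [Field k]

/-- The unipotent upper-triangular matrix `[[1, c], [0, 1]]`. -/
def uElt (c : F) : GL2 F :=
  Matrix.GeneralLinearGroup.mkOfDetNeZero !![1, c; 0, 1] (by simp [Matrix.det_fin_two_of])

/-- The upper-triangular matrix `[[a, c], [0, d]]`. -/
def bElt (a d : Fˣ) (c : F) : GL2 F :=
  Matrix.GeneralLinearGroup.mkOfDetNeZero !![(a : F), c; 0, (d : F)]
    (by simp [Matrix.det_fin_two_of])

/-- The diagonal matrix `[[a, 0], [0, d]]`. -/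
def hElt (a d : Fˣ) : GL2 F := bElt F a d 0

/-- The matrix `n_s = [[0, -1], [1, 0]]`. -/
def nsElt : GL2 F :=
  Matrix.GeneralLinearGroup.mkOfDetNeZero !![0, -1; 1, 0] (by norm_num [Matrix.det_fin_two_of])

/-- The right-translation representation of `GL₂(F)` on the space of `k`-valued functions. -/
def rt : Representation k (GL2 F) (GL2 F → k) where
  toFun g :=
    { toFun := fun f x => f (x * g)
      map_add' := fun _ _ => rfl
      map_smul' := fun _ _ => rfl }
  map_one' := by ext f x; simp
  map_mul' g g' := by ext f x; simp [mul_assoc]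

/-- `χ^s`, the character obtained from `χ` by swapping the two diagonal entries. -/
def swapChar (χ : (Fˣ × Fˣ) →* kˣ) : (Fˣ × Fˣ) →* kˣ where
  toFun x := χ (x.2, x.1)
  map_one' := χ.map_one
  map_mul' x y := by rw [← _root_.map_mul]; rfl

/-- The induced representation `Ind_B^Γ χ` as a subspace of the space of functions `Γ → k`:
functions satisfying `f (b * g) = χ (b) * f g` for all upper-triangular `b`. -/
def Ind (χ : (Fˣ × Fˣ) →* kˣ) : Submodule k (GL2 F → k) where
  carrier := {f | ∀ (a d : Fˣ) (c : F) (g : GL2 F), f (bElt F a d c * g) = (χ (a, d) : k) * f g}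
  add_mem' := by
    intro f1 f2 h1 h2 a d c g
    simp only [Pi.add_apply, h1 a d c g, h2 a d c g]
    ring
  zero_mem' := by intro a d c g; simp
  smul_mem' := by
    intro t f hf a d c g
    simp only [Pi.smul_apply, smul_eq_mul, hf a d c g]
    ring

/-- The Hecke operator `T_{n_s}`, `(T f) x = ∑_{c ∈ F} f (n_s⁻¹ * u_c * x)`. -/
def heckeT : (GL2 F → k) →ₗ[k] (GL2 F → k) where
  toFun f x := ∑ c : F, f ((nsElt F)⁻¹ * uElt F c * x)
  map_add' f g := by funext x; simp [Finset.sum_add_distrib]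
  map_smul' t f := by funext x; simp [Finset.mul_sum]

/-- The submodule of invariants of a representation under a set of group elements. -/
def invSubmodule {G V : Type*} [Group G] [AddCommGroup V] [Module k V]
    (ρ : Representation k G V) (S : Set G) : Submodule k V where
  carrier := {v | ∀ g ∈ S, ρ g v = v}
  add_mem' := by intro v w hv hw g hg; rw [map_add, hv g hg, hw g hg]
  zero_mem' := by intro g hg; rw [map_zero]
  smul_mem' := by intro c v hv g hg; rw [LinearMap.map_smul, hv g hg]

/-!
An element of `Ind χ` is determined by its value at `1` and by its coordinates
`φ_f μ = f (n_s⁻¹ u_μ)` on the big Bruhat cell, which we view in the group algebra `k[𝔽_q]`.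
In these coordinates `(T f) 1 = ∑ φ_f` and `φ_{T f} = χ(-1,-1) f(1) • N + c_χ * φ_f`, where
`N = ∑ [x]` and `c_χ t = η (-t)` for the character `η t = χ(t, t⁻¹)` of `𝔽_qˣ`. A Jacobi sum
gives `c_χ * c_{χ^s} = -χ(-1,-1) • N` as soon as `η ≠ 1` and `q = 0` in `k`; this already
yields `T ∘ T = 0`.

For the converse let `q = p`. Then `k[𝔽_p] ≅ k[v]/(v^p)` with `v = [1] - 1`, so every element
is `v^e` times a unit. If `T f = 0`, then `c_{χ^s} * φ_f` is a multiple of `N`, hence killed by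
`v`, while `c_χ * c_{χ^s} ≠ 0`; comparing `v`-adic valuations gives `c_χ ∣ φ_f`, and a quotient
`ψ` is the coordinate vector of a preimage of `f`.
-/

theorem exists_eq_pow_mul_isUnit {K A : Type*} [Field K] [CommRing A] [Algebra K A] {v : A}
    (hv : IsNilpotent v) (hsurj : Function.Surjective (Polynomial.aeval v : Polynomial K → A))
    (x : A) : ∃ (e : ℕ) (w : A), IsUnit w ∧ x = v ^ e * w := by
  obtain ⟨P, rfl⟩ := hsurj x
  rcases eq_or_ne P 0 with rfl | hP
  · obtain ⟨n, hn⟩ := hv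
    exact ⟨n, 1, isUnit_one, by rw [map_zero, hn, zero_mul]⟩
  obtain ⟨Q, hPQ, hQ⟩ := P.exists_eq_pow_rootMultiplicity_mul_and_not_dvd hP 0
  rw [map_zero, sub_zero] at hPQ hQ
  refine ⟨P.rootMultiplicity 0, Polynomial.aeval v Q, ?_, by
    conv_lhs => rw [hPQ]
    rw [map_mul, map_pow, Polynomial.aeval_X]⟩
  have hQ0 : IsUnit (algebraMap K A (Q.coeff 0)) :=
    (Ne.isUnit fun h => hQ (Polynomial.X_dvd_iff.mpr h)).map _
  have hQ' : Polynomial.aeval v Q = algebraMap K A (Q.coeff 0) + v * Polynomial.aeval v Q.divX := by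
    conv_lhs => rw [← Q.X_mul_divX_add]
    rw [map_add, map_mul, Polynomial.aeval_X, Polynomial.aeval_C, add_comm]
  rw [hQ']
  exact ((Commute.all v _).isNilpotent_mul_right hv).isUnit_add_left_of_commute hQ0
    (Commute.all _ _)

theorem dvd_of_mul_ne_zero_of_mul_mul_eq_zero {A : Type*} [CommRing A] {v : A}
    (hA : ∀ x : A, ∃ (e : ℕ) (w : A), IsUnit w ∧ x = v ^ e * w) {c c' x : A}
    (hcc' : c * c' ≠ 0) (hx : v * (c' * x) = 0) : c ∣ x := by
  obtain ⟨a, w₁, hw₁, rfl⟩ := hA c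
  obtain ⟨b, w₂, hw₂, rfl⟩ := hA c'
  obtain ⟨e, w₃, hw₃, rfl⟩ := hA x
  rcases le_or_gt a e with hae | hea
  · exact hw₁.mul_right_dvd.mpr ((pow_dvd_pow v hae).mul_right w₃)
  · have hv : v ^ (b + e + 1) = 0 := by
      refine (hw₂.mul hw₃).mul_left_eq_zero.mp ?_
      rw [← hx]; ring
    refine absurd ?_ hcc'
    calc v ^ a * w₁ * (v ^ b * w₂) = v ^ (a + b) * (w₁ * w₂) := by ring
      _ = 0 := by rw [pow_eq_zero_of_le (by omega) hv, zero_mul]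

namespace MulChar

variable {K R : Type*} [Field K] [Fintype K] [CommRing R] [IsDomain R]

theorem sum_mul_inv_apply_sub {η : MulChar K R} (hη : η ≠ 1)
    (hK : (Fintype.card K : R) = 0) (r : K) : ∑ t, η t * η⁻¹ (r - t) = -η (-1) := by
  classical
  rcases eq_or_ne r 0 with rfl | hr
  · have hterm (t : K) : η t * η⁻¹ (0 - t) = η (-1) * (1 : MulChar K R) t := by
      rcases eq_or_ne t 0 with rfl | ht
      · simp
      rw [zero_sub, inv_apply', ← map_mul, one_apply ht.isUnit, mul_one, inv_neg,
        mul_neg, mul_inv_cancel₀ ht]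
    have hunits : (Fintype.card Kˣ : R) = -1 := by
      rw [eq_neg_iff_add_eq_zero, ← Nat.cast_one, ← Nat.cast_add,
        ← Fintype.card_eq_card_units_add_one, hK]
    simp_rw [hterm, ← Finset.mul_sum, sum_one_eq_card_units, hunits, mul_neg_one]
  · have hterm (s : K) : η (r * s) * η⁻¹ (r - r * s) = η s * η⁻¹ (1 - s) := by
      rw [← mul_one_sub, map_mul, map_mul, mul_mul_mul_comm, ← mul_apply, mul_inv_cancel,
        one_apply hr.isUnit, one_mul]
    rw [← jacobiSum_nontrivial_inv hη, jacobiSum,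
      ← Equiv.sum_comp (Equiv.mulLeft₀ r hr)]
    exact Finset.sum_congr rfl fun s _ => hterm s

end MulChar

open scoped AddMonoidAlgebra

namespace AddMonoidAlgebra

section FiniteGroup

variable {R G : Type*} [CommRing R] [Fintype G]

def ofFun (φ : G → R) : R[G] := ofCoeff (Finsupp.equivFunOnFinite.symm φ)

@[simp]
theorem coeff_ofFun (φ : G → R) (g : G) : (ofFun φ).coeff g = φ g := rfl

def normElt : R[G] := ofFun 1

@[simp]
theorem coeff_normElt (g : G) : (normElt : R[G]).coeff g = 1 := rfl

variable [AddCommGroup G]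

theorem normElt_ne_zero [Nontrivial R] : (normElt : R[G]) ≠ 0 := fun h => by
  simpa using congr(($h).coeff 0)

theorem coeff_mul_eq_sum (x y : R[G]) (g : G) :
    (x * y).coeff g = ∑ h, x.coeff h * y.coeff (g - h) := by
  rw [coeff_mul_apply_left, Finsupp.sum_fintype _ _ fun _ => zero_mul _]
  simp only [neg_add_eq_sub]

theorem sum_coeff_mul (x y : R[G]) :
    ∑ g, (x * y).coeff g = (∑ g, x.coeff g) * ∑ g, y.coeff g := by
  simp_rw [coeff_mul_eq_sum, Finset.sum_mul, Finset.mul_sum]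
  rw [Finset.sum_comm]
  exact Finset.sum_congr rfl fun h _ =>
    Fintype.sum_equiv (Equiv.subRight h) _ _ fun _ => rfl

theorem normElt_mul (x : R[G]) : normElt * x = (∑ g, x.coeff g) • normElt := by
  ext g
  rw [coeff_mul_eq_sum, coeff_smul_apply, coeff_normElt, smul_eq_mul, mul_one]
  simp only [coeff_normElt, one_mul]
  exact Fintype.sum_equiv (Equiv.subLeft g) _ _ fun _ => rfl

theorem mul_normElt (x : R[G]) : x * normElt = (∑ g, x.coeff g) • normElt := by
  rw [mul_comm, normElt_mul]

theorem single_mul_normElt (g : G) : single g (1 : R) * normElt = normElt := by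
  simp only [mul_normElt, coeff_single, Finsupp.univ_sum_single_apply, one_smul]

end FiniteGroup

section PrimeOrder

variable {K G : Type*} [Field K] [AddCommGroup G] {p : ℕ} [Fact p.Prime]

theorem single_sub_one_pow_char [CharP K p] (hG : Nat.card G = p) (g : G) :
    (single g (1 : K) - 1) ^ p = 0 := by
  have := charP_of_injective_algebraMap' K (A := K[G]) p
  rw [sub_pow_char, single_pow, one_pow, ← hG, card_nsmul_eq_zero', one_pow, one_def, sub_self]

theorem aeval_single_sub_one_surjective (hG : Nat.card G = p) {g : G} (hg : g ≠ 0) :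
    Function.Surjective (Polynomial.aeval (R := K) (single g (1 : K) - 1)) := by
  intro x
  change x ∈ (Polynomial.aeval (R := K) (single g (1 : K) - 1)).range
  induction x using AddMonoidAlgebra.induction_linear with
  | zero => exact zero_mem _
  | add x y hx hy => exact add_mem hx hy
  | single h b =>
    obtain ⟨m, rfl⟩ := (AddSubmonoid.mem_multiples_iff _ _).mp
      (mem_multiples_of_prime_card hG hg (g' := h))
    have hv : single g (1 : K) - 1 ∈ (Polynomial.aeval (R := K) (single g (1 : K) - 1)).range :=
      ⟨Polynomial.X, Polynomial.aeval_X _⟩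
    have hu := add_mem hv (one_mem _)
    rw [sub_add_cancel] at hu
    rw [show single (m • g) b = b • single g (1 : K) ^ m by
      rw [single_pow, one_pow, smul_single, smul_eq_mul, mul_one]]
    exact Subalgebra.smul_mem _ (pow_mem hu m) b

theorem exists_eq_single_sub_one_pow_mul_isUnit [CharP K p] (hG : Nat.card G = p) {g : G}
    (hg : g ≠ 0) (x : K[G]) :
    ∃ (e : ℕ) (w : K[G]), IsUnit w ∧ x = (single g 1 - 1) ^ e * w :=
  exists_eq_pow_mul_isUnit ⟨p, single_sub_one_pow_char hG g⟩
    (aeval_single_sub_one_surjective hG hg) x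

end PrimeOrder

end AddMonoidAlgebra

section TorusCharacter

variable {K R : Type} [Field K] [Field R] (χ : (Kˣ × Kˣ) →* Rˣ)

def leftChar : MulChar K R := MulChar.ofUnitHom (χ.comp (MonoidHom.inl Kˣ Kˣ))

def rightChar : MulChar K R := MulChar.ofUnitHom (χ.comp (MonoidHom.inr Kˣ Kˣ))

theorem coe_apply_eq_leftChar_mul_rightChar (a d : Kˣ) :
    (χ (a, d) : R) = leftChar χ a * rightChar χ d := by
  rw [leftChar, rightChar, MulChar.ofUnitHom_coe, MulChar.ofUnitHom_coe, MonoidHom.comp_apply,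
    MonoidHom.comp_apply, ← Units.val_mul, ← map_mul, MonoidHom.inl_apply, MonoidHom.inr_apply,
    Prod.mk_mul_mk, mul_one, one_mul]

def antidiagChar : MulChar K R := leftChar χ * (rightChar χ)⁻¹

theorem antidiagChar_apply (x : K) : antidiagChar χ x = leftChar χ x * rightChar χ x⁻¹ := by
  rw [antidiagChar, MulChar.mul_apply, MulChar.inv_apply']

theorem antidiagChar_neg_one : antidiagChar χ (-1) = χ (-1, -1) := by
  rw [antidiagChar_apply, coe_apply_eq_leftChar_mul_rightChar, Units.val_neg, Units.val_one,
    inv_neg, inv_one]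

theorem swapChar_apply (a d : Kˣ) : swapChar K R χ (a, d) = χ (d, a) := rfl

theorem swapChar_swapChar : swapChar K R (swapChar K R χ) = χ := rfl

theorem leftChar_swapChar : leftChar (swapChar K R χ) = rightChar χ :=
  MulChar.ext fun _ => by simp [leftChar, rightChar, swapChar]

theorem rightChar_swapChar : rightChar (swapChar K R χ) = leftChar χ :=
  MulChar.ext fun _ => by simp [leftChar, rightChar, swapChar]

theorem antidiagChar_swapChar : antidiagChar (swapChar K R χ) = (antidiagChar χ)⁻¹ := by
  rw [antidiagChar, antidiagChar, leftChar_swapChar, rightChar_swapChar, _root_.mul_inv_rev,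
    inv_inv]

variable {χ}

theorem antidiagChar_ne_one (hχ : χ ≠ swapChar K R χ) : antidiagChar χ ≠ 1 := by
  intro h
  have hlr : leftChar χ = rightChar χ := mul_inv_eq_one.mp h
  refine hχ (MonoidHom.ext fun ⟨a, d⟩ => Units.ext ?_)
  rw [swapChar_apply, coe_apply_eq_leftChar_mul_rightChar,
    coe_apply_eq_leftChar_mul_rightChar, hlr, mul_comm]

end TorusCharacter

section BruhatCells

variable (K : Type) [Field K]

def wElt (μ : K) : GL2 K := (nsElt K)⁻¹ * uElt K μ

variable {K}

@[simp]
theorem coe_bElt (a d : Kˣ) (c : K) :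
    (bElt K a d c : Matrix (Fin 2) (Fin 2) K) = !![(a : K), c; 0, (d : K)] := rfl

@[simp]
theorem coe_wElt (μ : K) : (wElt K μ : Matrix (Fin 2) (Fin 2) K) = !![0, 1; -1, -μ] := by
  suffices h : wElt K μ = Matrix.GeneralLinearGroup.mkOfDetNeZero !![0, 1; -1, -μ]
      (by simp [det_fin_two_of]) from congr_arg Units.val h
  rw [wElt, inv_mul_eq_iff_eq_mul]
  ext i j
  fin_cases i <;> fin_cases j <;> simp [nsElt, uElt]

theorem wElt_mul_bElt (l : K) (a d : Kˣ) (c : K) :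
    wElt K l * bElt K a d c = bElt K d a 0 * wElt K ((c + l * d) / a) := by
  ext i j
  fin_cases i <;> fin_cases j <;> simp
  field_simp
  ring

theorem wElt_zero_mul_wElt (μ : K) : wElt K 0 * wElt K μ = bElt K (-1) (-1) (-μ) := by
  ext i j
  fin_cases i <;> fin_cases j <;> simp

theorem wElt_mul_wElt (l : Kˣ) (μ : K) :
    wElt K l * wElt K μ = bElt K (-l⁻¹) (-l) 1 * wElt K (μ - (l : K)⁻¹) := by
  ext i j
  fin_cases i <;> fin_cases j <;> simp <;> field_simp <;> ring

theorem eq_bElt_or_eq_bElt_mul_wElt (g : GL2 K) :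
    (∃ a d c, g = bElt K a d c) ∨ ∃ a d c μ, g = bElt K a d c * wElt K μ := by
  have hdet := g.det_ne_zero
  set A : Matrix (Fin 2) (Fin 2) K := g.val with hA
  rw [det_fin_two] at hdet
  by_cases h10 : A 1 0 = 0
  · left
    rw [h10, mul_zero, sub_zero] at hdet
    refine ⟨Units.mk0 _ (left_ne_zero_of_mul hdet), Units.mk0 _ (right_ne_zero_of_mul hdet),
      A 0 1, ?_⟩
    ext i j
    fin_cases i <;> fin_cases j <;> simp [← hA, h10]
  · right
    refine ⟨Units.mk0 (-(A 0 0 * A 1 1 - A 0 1 * A 1 0) / A 1 0)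
      (div_ne_zero (neg_ne_zero.mpr hdet) h10), Units.mk0 (-A 1 0) (neg_ne_zero.mpr h10),
      -A 0 0, A 1 1 / A 1 0, ?_⟩
    ext i j
    fin_cases i <;> fin_cases j <;> simp [← hA] <;> field_simp
    ring

end BruhatCells

section InducedRepresentation

variable {K R : Type} [Field K] [Field R] {χ : (Kˣ × Kˣ) →* Rˣ} {f f' : GL2 K → R}

theorem apply_bElt_of_mem_Ind (hf : f ∈ Ind K R χ) (a d : Kˣ) (c : K) :
    f (bElt K a d c) = χ (a, d) * f 1 := by
  simpa using hf a d c 1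

theorem eq_of_mem_Ind (hf : f ∈ Ind K R χ) (hf' : f' ∈ Ind K R χ) (h1 : f 1 = f' 1)
    (hw : ∀ μ, f (wElt K μ) = f' (wElt K μ)) : f = f' := by
  funext g
  rcases eq_bElt_or_eq_bElt_mul_wElt g with ⟨a, d, c, rfl⟩ | ⟨a, d, c, μ, rfl⟩
  · rw [apply_bElt_of_mem_Ind hf, apply_bElt_of_mem_Ind hf', h1]
  · rw [hf, hf', hw]

theorem apply_wElt_mul_wElt [DecidableEq K] (hf : f ∈ Ind K R χ) (l μ : K) :
    f (wElt K l * wElt K μ) = (if l = 0 then (χ (-1, -1) : R) * f 1 else 0)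
      + antidiagChar χ (-l⁻¹) * f (wElt K (μ - l⁻¹)) := by
  rcases eq_or_ne l 0 with rfl | hl
  · rw [wElt_zero_mul_wElt, apply_bElt_of_mem_Ind hf, if_pos rfl, _root_.inv_zero, neg_zero,
      MulChar.map_zero, zero_mul, add_zero]
  · lift l to Kˣ using hl.isUnit
    rw [wElt_mul_wElt, hf, if_neg l.ne_zero, zero_add, coe_apply_eq_leftChar_mul_rightChar,
      antidiagChar_apply, inv_neg, inv_inv]
    push_cast
    rfl

-- `bElt K a d c * wElt K μ` has `x 1 0 = -d`, `x 1 1 = -d μ` and `det x = a d`; off the big cell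
-- `x 1 0 = 0` and the factor `rightChar χ 0` vanishes.
variable (χ) in
def extendBigCell (φ : K → R) (x : GL2 K) : R :=
  leftChar χ (-(x : Matrix (Fin 2) (Fin 2) K).det / x 1 0) * rightChar χ (-x 1 0)
    * φ (x 1 1 / x 1 0)

theorem extendBigCell_mem_Ind (φ : K → R) : extendBigCell χ φ ∈ Ind K R χ := by
  intro a d c x
  set X : Matrix (Fin 2) (Fin 2) K := x.val
  have h10 : ((bElt K a d c * x : GL2 K) : Matrix (Fin 2) (Fin 2) K) 1 0 = d * X 1 0 := by
    simp [X, Matrix.mul_apply, Fin.sum_univ_two]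
  have h11 : ((bElt K a d c * x : GL2 K) : Matrix (Fin 2) (Fin 2) K) 1 1 = d * X 1 1 := by
    simp [X, Matrix.mul_apply, Fin.sum_univ_two]
  have hdet : ((bElt K a d c * x : GL2 K) : Matrix (Fin 2) (Fin 2) K).det
      = a * d * X.det := by
    rw [Units.val_mul, det_mul, coe_bElt, det_fin_two_of, mul_zero, sub_zero]
  have hd : (d : K) ≠ 0 := d.ne_zero
  simp only [extendBigCell, h10, h11, hdet, coe_apply_eq_leftChar_mul_rightChar]
  rw [show -(a * d * X.det) = d * (a * -X.det) by ring,
    mul_div_mul_left _ _ hd, mul_div_mul_left _ _ hd, mul_div_assoc, ← mul_neg, map_mul, map_mul]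
  ring

theorem extendBigCell_one (φ : K → R) : extendBigCell χ φ 1 = 0 := by
  simp [extendBigCell, MulChar.map_zero]

theorem extendBigCell_wElt (φ : K → R) (μ : K) : extendBigCell χ φ (wElt K μ) = φ μ := by
  simp [extendBigCell, det_fin_two_of]

end InducedRepresentation

section HeckeOperator

open AddMonoidAlgebra

variable {F k} {χ : (Fˣ × Fˣ) →* kˣ} {f : GL2 F → k}

variable (χ) in
def heckeKernel : k[F] := ofFun fun t => antidiagChar χ (-t)

theorem sum_coeff_heckeKernel (hχ : χ ≠ swapChar F k χ) :
    ∑ t, (heckeKernel χ).coeff t = 0 :=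
  (Equiv.sum_comp (Equiv.neg F) (antidiagChar χ)).trans
    (MulChar.sum_eq_zero_of_ne_one (antidiagChar_ne_one hχ))

theorem heckeKernel_mul_heckeKernel_swapChar (hχ : χ ≠ swapChar F k χ)
    (hcard : (Fintype.card F : k) = 0) :
    heckeKernel χ * heckeKernel (swapChar F k χ) = (-(χ (-1, -1) : k)) • normElt := by
  ext r
  rw [coeff_mul_eq_sum, coeff_smul_apply, coeff_normElt, smul_eq_mul, mul_one,
    ← antidiagChar_neg_one,
    ← MulChar.sum_mul_inv_apply_sub (antidiagChar_ne_one hχ) hcard (-r),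
    ← Equiv.sum_comp (Equiv.neg F)]
  refine Finset.sum_congr rfl fun t _ => ?_
  simp only [heckeKernel, coeff_ofFun, antidiagChar_swapChar, Equiv.neg_apply, neg_neg]
  rw [show -(r - -t) = -r - t by ring]

def bigCellCoord (f : GL2 F → k) : k[F] := ofFun fun μ => f (wElt F μ)

@[simp]
theorem coeff_bigCellCoord (f : GL2 F → k) (μ : F) :
    (bigCellCoord f).coeff μ = f (wElt F μ) := rfl

theorem heckeT_apply (f : GL2 F → k) (x : GL2 F) :
    heckeT F k f x = ∑ l, f (wElt F l * x) := rfl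

theorem heckeT_apply_one (f : GL2 F → k) :
    heckeT F k f 1 = ∑ μ, (bigCellCoord f).coeff μ := by
  simp [heckeT_apply]

theorem bigCellCoord_heckeT (hf : f ∈ Ind F k χ) :
    bigCellCoord (heckeT F k f)
      = ((χ (-1, -1) : k) * f 1) • normElt + heckeKernel χ * bigCellCoord f := by
  classical
  ext μ
  rw [coeff_add, Finsupp.add_apply, coeff_smul_apply, coeff_normElt, smul_eq_mul, mul_one,
    coeff_mul_eq_sum, coeff_bigCellCoord, heckeT_apply]
  simp only [apply_wElt_mul_wElt hf, Finset.sum_add_distrib, Finset.sum_ite_eq', Finset.mem_univ,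
    if_true, heckeKernel, coeff_ofFun, coeff_bigCellCoord]
  congr 1
  exact Equiv.sum_comp (Equiv.inv F) fun t => antidiagChar χ (-t) * f (wElt F (μ - t))

theorem heckeT_mem_Ind (hf : f ∈ Ind F k χ) : heckeT F k f ∈ Ind F k (swapChar F k χ) := by
  intro a d c g
  let e : F ≃ F := ((Equiv.mulRight₀ (d : F) d.ne_zero).trans (Equiv.addLeft c)).trans
    (Equiv.divRight₀ (a : F) a.ne_zero)
  calc heckeT F k f (bElt F a d c * g) = ∑ l, (χ (d, a) : k) * f (wElt F (e l) * g) := by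
        simp only [heckeT_apply, ← mul_assoc, wElt_mul_bElt]
        exact Finset.sum_congr rfl fun l _ => by rw [mul_assoc, hf]; rfl
    _ = _ := by
        rw [← Finset.mul_sum, e.sum_comp fun μ => f (wElt F μ * g)]
        rfl

theorem heckeT_heckeT_eq_zero (hχ : χ ≠ swapChar F k χ) (hcard : (Fintype.card F : k) = 0)
    (hf : f ∈ Ind F k χ) : heckeT F k (heckeT F k f) = 0 := by
  have hTf := heckeT_mem_Ind hf
  have hTTf : heckeT F k (heckeT F k f) ∈ Ind F k χ := by
    simpa only [swapChar_swapChar] using heckeT_mem_Ind hTf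
  have hχ' : swapChar F k χ ≠ swapChar F k (swapChar F k χ) := by
    rw [swapChar_swapChar]; exact hχ.symm
  have hN : heckeKernel (swapChar F k χ) * normElt = 0 := by
    rw [mul_normElt, sum_coeff_heckeKernel hχ', zero_smul]
  have hcc : heckeKernel (swapChar F k χ) * heckeKernel χ * bigCellCoord f
      = (-(χ (-1, -1) : k) * ∑ μ, (bigCellCoord f).coeff μ) • normElt := by
    rw [mul_comm (heckeKernel _), heckeKernel_mul_heckeKernel_swapChar hχ hcard, smul_mul_assoc,
      normElt_mul, smul_smul]
  have hcoord : bigCellCoord (heckeT F k (heckeT F k f)) = 0 := by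
    rw [bigCellCoord_heckeT hTf, bigCellCoord_heckeT hf, heckeT_apply_one, mul_add, mul_smul_comm,
      hN, smul_zero, zero_add, ← mul_assoc, hcc, ← add_smul, swapChar_apply, neg_mul,
      add_neg_cancel, zero_smul]
  refine eq_of_mem_Ind hTTf (zero_mem _) ?_ fun μ => congr(($hcoord).coeff μ)
  rw [heckeT_apply_one, bigCellCoord_heckeT hf]
  simp [Finset.sum_add_distrib, sum_coeff_mul, sum_coeff_heckeKernel hχ, hcard]

end HeckeOperator

section Exactness

open AddMonoidAlgebra

variable {F k} {χ : (Fˣ × Fˣ) →* kˣ}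

theorem bigCellCoord_extendBigCell (ψ : k[F]) : bigCellCoord (extendBigCell χ ψ.coeff) = ψ := by
  ext μ
  rw [coeff_bigCellCoord, extendBigCell_wElt]

theorem exists_heckeT_eq_of_heckeT_eq_zero {p : ℕ} [Fact p.Prime] [CharP k p]
    (hF : Fintype.card F = p) (hχ : χ ≠ swapChar F k χ) {f : GL2 F → k}
    (hf : f ∈ Ind F k (swapChar F k χ)) (hTf : heckeT F k f = 0) :
    ∃ g ∈ Ind F k χ, heckeT F k g = f := by
  have hcard : (Fintype.card F : k) = 0 := by rw [hF]; exact CharP.cast_eq_zero k p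
  have hγ : -(χ (-1, -1) : k) ≠ 0 := neg_ne_zero.mpr (Units.ne_zero _)
  have hcf : heckeKernel (swapChar F k χ) * bigCellCoord f
      = (-((χ (-1, -1) : k) * f 1)) • normElt := by
    have h := bigCellCoord_heckeT hf
    rw [hTf, swapChar_apply, show bigCellCoord (0 : GL2 F → k) = 0 by ext; rfl] at h
    rw [neg_smul, eq_neg_iff_add_eq_zero, add_comm]
    exact h.symm
  obtain ⟨ψ, hψ⟩ : heckeKernel χ ∣ bigCellCoord f := by
    have hp : Nat.card F = p := Nat.card_eq_fintype_card.trans hF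
    refine dvd_of_mul_ne_zero_of_mul_mul_eq_zero (c' := heckeKernel (swapChar F k χ))
      (exists_eq_single_sub_one_pow_mul_isUnit hp one_ne_zero) ?_ ?_
    · rw [heckeKernel_mul_heckeKernel_swapChar hχ hcard]
      exact smul_ne_zero hγ normElt_ne_zero
    · rw [hcf, mul_smul_comm, sub_mul, single_mul_normElt, one_mul, sub_self, smul_zero]
  have hsum : ∑ μ, ψ.coeff μ = f 1 := by
    have h := congr(heckeKernel (swapChar F k χ) * $hψ)
    rw [hcf, ← mul_assoc, mul_comm (heckeKernel _),
      heckeKernel_mul_heckeKernel_swapChar hχ hcard, smul_mul_assoc, normElt_mul, smul_smul] at h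
    exact mul_left_cancel₀ hγ (by rw [← smul_left_injective k normElt_ne_zero h, neg_mul])
  have hg := extendBigCell_mem_Ind (χ := χ) ψ.coeff
  refine ⟨_, hg, eq_of_mem_Ind (heckeT_mem_Ind hg) hf ?_ fun μ => ?_⟩
  · rw [heckeT_apply_one, bigCellCoord_extendBigCell, hsum]
  · have h := bigCellCoord_heckeT hg
    rw [bigCellCoord_extendBigCell, extendBigCell_one, mul_zero, zero_smul, zero_add, ← hψ] at h
    exact congr(($h).coeff μ)

end Exactness

theorem stmt_5 (p : ℕ) [Fact p.Prime] (hF : Fintype.card F = p)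
    [CharP k p]
    (χ : (Fˣ × Fˣ) →* kˣ) (hχ : χ ≠ swapChar F k χ) :
    Ind F k (swapChar F k χ) ⊓ LinearMap.ker (heckeT F k) =
      Submodule.map (heckeT F k) (Ind F k χ) := by
  have hcard : (Fintype.card F : k) = 0 := by rw [hF]; exact CharP.cast_eq_zero k p
  apply le_antisymm
  · rintro f ⟨hf, hTf⟩
    exact exists_heckeT_eq_of_heckeT_eq_zero hF hχ hf hTf
  · rintro _ ⟨g, hg, rfl⟩
    exact ⟨heckeT_mem_Ind hg, heckeT_heckeT_eq_zero hχ hcard hg⟩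

end
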